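/- arXiv:1508.02625 — 3 statements merged into one kernel-verified Lean document; each statement's English description precedes it below -/
import Mathlib

section
/- Let a ≥ 2 be an integer and let Φ = (1 + √5)/2. The set B of natural numbers k for which the interval [a^k, a^(k+1)) contains exactly ⌈(log a)/(log Φ)⌉ Fibonacci numbers has natural density equal to ⟨(log a)/(log Φ)⟩, i.e., the limit as N → ∞ of card(B ∩ [0, N))/N exists and equals ⟨(log a)/(log Φ)⟩, where ⟨x⟩ denotes the fractional part of x. -/
/-!
Let `e m` be the least `n ≥ 2` with `m ≤ F n`, so that `[x, y)` contains `e y - e x` Fibonacci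
numbers. Write `j = ⌊log_Φ a⌋`. No power of `Φ` is an integer (other than `1`), so
`Φ ^ j < a < Φ ^ (j + 1)`, and since `F (n + i) / F n → Φ ^ i`, for large `k` the increment
`e (a ^ (k + 1)) - e (a ^ k)` is `j` or `j + 1`, the latter exactly when `k ∈ B`. Hence
`#(B ∩ [0, N)) = e (a ^ N) - j N + O(1)`, while `Φ ^ (n - 2) ≤ F n ≤ Φ ^ (n - 1)` gives
`e (a ^ N) = N log_Φ a + O(1)`.
-/

open Filter

noncomputable def Phi : ℝ := (1 + Real.sqrt 5) / 2

open Real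
open Nat (fib)
open scoped goldenRatio Topology

theorem fib_add_two_le_goldenRatio_pow (n : ℕ) : (fib (n + 2) : ℝ) ≤ φ ^ (n + 1) := by
  rw [← goldenRatio_mul_fib_succ_add_fib, Nat.fib_add_two, Nat.cast_add, add_comm]
  gcongr
  exact le_mul_of_one_le_left (Nat.cast_nonneg _) one_lt_goldenRatio.le

theorem goldenRatio_pow_le_fib_add_two (n : ℕ) : φ ^ n ≤ fib (n + 2) := by
  cases n with
  | zero => simp
  | succ n =>
    rw [← goldenRatio_mul_fib_succ_add_fib, Nat.fib_add_two, Nat.fib_add_two, Nat.cast_add,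
      Nat.cast_add]
    nlinarith [goldenRatio_lt_two, (Nat.cast_nonneg (fib (n + 1)) : (0 : ℝ) ≤ _)]

theorem irrational_goldenRatio_pow {n : ℕ} (hn : n ≠ 0) : Irrational (φ ^ n) := by
  obtain ⟨k, rfl⟩ := Nat.exists_eq_succ_of_ne_zero hn
  rw [← goldenRatio_mul_fib_succ_add_fib]
  exact (goldenRatio_irrational.mul_natCast (Nat.fib_pos.2 k.succ_pos).ne').add_natCast _

theorem goldenRatio_pow_ne_natCast {a : ℕ} (ha : a ≠ 1) (n : ℕ) : φ ^ n ≠ a := by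
  rcases eq_or_ne n 0 with rfl | hn
  · simpa [eq_comm] using ha
  · exact (irrational_goldenRatio_pow hn).ne_nat a

theorem tendsto_fib_add_div_fib_atTop (j : ℕ) :
    Tendsto (fun n ↦ (fib (n + j) / fib n : ℝ)) atTop (𝓝 (φ ^ j)) := by
  induction j with
  | zero =>
    refine tendsto_const_nhds.congr' ?_
    filter_upwards [eventually_gt_atTop 0] with n hn
    simp [div_self (Nat.cast_ne_zero.2 (Nat.fib_pos.2 hn).ne' : (fib n : ℝ) ≠ 0)]
  | succ j ih =>
    rw [pow_succ']
    refine ((tendsto_add_atTop_iff_nat j).2 tendsto_fib_succ_div_fib_atTop |>.mul ih).congr' ?_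
    filter_upwards [eventually_gt_atTop 0] with n hn
    rw [← add_assoc, div_mul_div_cancel₀ (Nat.cast_ne_zero.2 (Nat.fib_pos.2 (by omega)).ne')]

theorem eventually_fib_add_lt_mul_fib {c : ℝ} {j : ℕ} (h : φ ^ j < c) :
    ∀ᶠ n in atTop, (fib (n + j) : ℝ) < c * fib n := by
  filter_upwards [(tendsto_fib_add_div_fib_atTop j).eventually_lt_const h,
    eventually_gt_atTop 0] with n hlt hn
  rwa [div_lt_iff₀ (Nat.cast_pos.2 (Nat.fib_pos.2 hn))] at hlt

theorem eventually_mul_fib_lt_fib_add {c : ℝ} {j : ℕ} (h : c < φ ^ j) :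
    ∀ᶠ n in atTop, c * fib n < fib (n + j) := by
  filter_upwards [(tendsto_fib_add_div_fib_atTop j).eventually_const_lt h,
    eventually_gt_atTop 0] with n hlt hn
  rwa [lt_div_iff₀ (Nat.cast_pos.2 (Nat.fib_pos.2 hn))] at hlt

-- `fib` is injective on `n ≥ 2`, so `fibCeilIndex m - 2` counts the positive Fibonacci numbers
-- below `m`.
noncomputable def fibCeilIndex (m : ℕ) : ℕ :=
  Nat.find (⟨m + 5, by omega, (Nat.le_add_right m 5).trans (Nat.le_fib_self (by omega))⟩ :
    ∃ n, 2 ≤ n ∧ m ≤ fib n)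

theorem two_le_fibCeilIndex (m : ℕ) : 2 ≤ fibCeilIndex m :=
  (Nat.find_spec (p := fun n ↦ 2 ≤ n ∧ m ≤ fib n) _).1

theorem fibCeilIndex_le_iff {m n : ℕ} (hn : 2 ≤ n) : fibCeilIndex m ≤ n ↔ m ≤ fib n := by
  rw [fibCeilIndex, Nat.find_le_iff]
  exact ⟨fun ⟨k, hkn, _, hk⟩ ↦ hk.trans (Nat.fib_mono hkn), fun h ↦ ⟨n, le_rfl, hn, h⟩⟩

theorem lt_fibCeilIndex_iff {m n : ℕ} (hn : 2 ≤ n) : n < fibCeilIndex m ↔ fib n < m := by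
  simpa using (fibCeilIndex_le_iff hn).not

theorem le_fib_fibCeilIndex (m : ℕ) : m ≤ fib (fibCeilIndex m) :=
  (fibCeilIndex_le_iff (two_le_fibCeilIndex m)).1 le_rfl

theorem tendsto_fibCeilIndex_atTop : Tendsto fibCeilIndex atTop atTop :=
  tendsto_atTop_atTop.2 fun n ↦ ⟨fib (n + 2) + 1, fun _ hm ↦
    ((lt_fibCeilIndex_iff (Nat.le_add_left 2 n)).2 hm).le.trans' (Nat.le_add_right n 2)⟩

theorem range_fib_inter_Ico {x y : ℕ} (hx : x ≠ 0) :
    Set.range fib ∩ Set.Ico x y = fib '' Set.Ico (fibCeilIndex x) (fibCeilIndex y) := by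
  ext m
  constructor
  · rintro ⟨⟨n, rfl⟩, hxn, hny⟩
    have hn : n ≠ 0 := by rintro rfl; exact hx (Nat.le_zero.1 hxn)
    -- `fib 1 = fib 2`, so the index can be taken `≥ 2`
    have hfib : fib (max n 2) = fib n := by
      rcases Nat.lt_or_ge n 2 with h | h
      · obtain rfl : n = 1 := by omega
        rfl
      · rw [max_eq_left h]
    rw [← hfib] at hxn hny ⊢
    exact ⟨max n 2, ⟨(fibCeilIndex_le_iff (le_max_right n 2)).2 hxn,
      (lt_fibCeilIndex_iff (le_max_right n 2)).2 hny⟩, rfl⟩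
  · rintro ⟨n, ⟨hxn, hny⟩, rfl⟩
    have hn : 2 ≤ n := (two_le_fibCeilIndex x).trans hxn
    exact ⟨⟨n, rfl⟩, (fibCeilIndex_le_iff hn).1 hxn, (lt_fibCeilIndex_iff hn).1 hny⟩

theorem ncard_range_fib_inter_Ico {x y : ℕ} (hx : x ≠ 0) :
    (Set.range fib ∩ Set.Ico x y).ncard = fibCeilIndex y - fibCeilIndex x := by
  rw [range_fib_inter_Ico hx, Set.InjOn.ncard_image, ← Finset.coe_Ico, Set.ncard_coe_finset,
    Nat.card_Ico]
  exact Nat.fib_strictMonoOn.injOn.mono fun n hn ↦ (two_le_fibCeilIndex x).trans hn.1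

theorem logb_natCast_nonneg {b : ℝ} (hb : 1 < b) (m : ℕ) : 0 ≤ logb b m :=
  div_nonneg (log_natCast_nonneg m) (log_pos hb).le

theorem logb_add_one_le_fibCeilIndex (m : ℕ) : logb φ m + 1 ≤ fibCeilIndex m := by
  obtain ⟨k, hk⟩ := Nat.exists_eq_add_of_le' (two_le_fibCeilIndex m)
  rcases Nat.eq_zero_or_pos m with rfl | hm
  · simp only [hk, Nat.cast_zero, logb_zero]
    push_cast
    linarith
  have hle : (m : ℝ) ≤ φ ^ ((k + 1 : ℕ) : ℝ) := by
    rw [rpow_natCast]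
    exact (Nat.cast_le.2 (hk ▸ le_fib_fibCeilIndex m)).trans (fib_add_two_le_goldenRatio_pow k)
  rw [hk]
  push_cast at hle ⊢
  linarith [(logb_le_iff_le_rpow one_lt_goldenRatio (Nat.cast_pos.2 hm)).2 hle]

theorem fibCeilIndex_lt_logb_add_three (m : ℕ) : (fibCeilIndex m : ℝ) < logb φ m + 3 := by
  obtain ⟨k, hk⟩ := Nat.exists_eq_add_of_le' (two_le_fibCeilIndex m)
  rcases k with _ | i
  · rw [hk]
    push_cast
    linarith [logb_natCast_nonneg one_lt_goldenRatio m]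
  have hlt : fib (i + 2) < m := (lt_fibCeilIndex_iff le_add_self).1 (by omega)
  have hpow : φ ^ ((i : ℕ) : ℝ) < m := by
    rw [rpow_natCast]
    exact (goldenRatio_pow_le_fib_add_two i).trans_lt (Nat.cast_lt.2 hlt)
  rw [hk]
  push_cast
  linarith [(lt_logb_iff_rpow_lt one_lt_goldenRatio (Nat.cast_pos.2 (by omega))).2 hpow]

theorem tendsto_fibCeilIndex_pow_div (a : ℕ) :
    Tendsto (fun N : ℕ ↦ (fibCeilIndex (a ^ N) : ℝ) / N) atTop (𝓝 (logb φ a)) := by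
  have hlim (C : ℝ) : Tendsto (fun N : ℕ ↦ logb φ a + C / N) atTop (𝓝 (logb φ a)) := by
    simpa using tendsto_const_nhds.add (tendsto_const_div_atTop_nhds_zero_nat C)
  refine tendsto_of_tendsto_of_tendsto_of_le_of_le' (hlim 1) (hlim 3) ?_ ?_
  · filter_upwards [eventually_gt_atTop 0] with N hN
    have := logb_add_one_le_fibCeilIndex (a ^ N)
    push_cast [logb_pow] at this
    rw [le_div_iff₀ (by positivity), add_mul, div_mul_cancel₀ _ (by positivity)]
    linarith
  · filter_upwards [eventually_gt_atTop 0] with N hN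
    have := fibCeilIndex_lt_logb_add_three (a ^ N)
    push_cast [logb_pow] at this
    rw [div_le_iff₀ (by positivity), add_mul, div_mul_cancel₀ _ (by positivity)]
    linarith

theorem eventually_fibCeilIndex_mul {c j : ℕ} (hlo : φ ^ j < c) (hhi : c < φ ^ (j + 1)) :
    ∀ᶠ m in atTop, fibCeilIndex m + j ≤ fibCeilIndex (c * m) ∧
      fibCeilIndex (c * m) ≤ fibCeilIndex m + j + 1 := by
  obtain ⟨n₁, hlt⟩ := eventually_atTop.1 (eventually_fib_add_lt_mul_fib hlo)
  obtain ⟨n₂, hgt⟩ := eventually_atTop.1 (eventually_mul_fib_lt_fib_add hhi)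
  filter_upwards [tendsto_fibCeilIndex_atTop.eventually_ge_atTop (n₁ + n₂ + 3)] with m hm
  set e := fibCeilIndex m
  constructor
  · have hprev : fib (e - 1) < m := (lt_fibCeilIndex_iff (by omega)).1 (by omega)
    have hshift : (fib (e - 1 + j) : ℝ) < c * m :=
      calc (fib (e - 1 + j) : ℝ) < c * fib (e - 1) := hlt (e - 1) (by omega)
        _ ≤ c * m := by gcongr
    have := (lt_fibCeilIndex_iff (n := e - 1 + j) (by omega)).2 (by exact_mod_cast hshift)
    omega
  · refine (fibCeilIndex_le_iff (by omega)).2 ?_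
    have hshift : (c * m : ℝ) ≤ fib (e + j + 1) :=
      calc (c * m : ℝ) ≤ c * fib e := by gcongr; exact le_fib_fibCeilIndex m
        _ ≤ fib (e + (j + 1)) := (hgt e (by omega)).le
    exact_mod_cast hshift

theorem tendsto_card_filter_div_of_increments {e : ℕ → ℕ} {j : ℕ} {θ : ℝ}
    (hinc : ∀ᶠ k in atTop, e k + j ≤ e (k + 1) ∧ e (k + 1) ≤ e k + j + 1)
    (he : Tendsto (fun N : ℕ ↦ (e N : ℝ) / N) atTop (𝓝 θ)) :
    Tendsto
      (fun N : ℕ ↦ ((Finset.range N).filter (fun k ↦ e (k + 1) = e k + j + 1)).card / (N : ℝ))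
      atTop (𝓝 (θ - j)) := by
  set count : ℕ → ℝ := fun N ↦ ((Finset.range N).filter (fun k ↦ e (k + 1) = e k + j + 1)).card
  -- once the increments are `j` or `j + 1`, the count of `j + 1`'s grows exactly like `e N - N j`
  set defect : ℕ → ℝ := fun N ↦ count N - e N + N * j
  obtain ⟨K, hK⟩ := eventually_atTop.1 hinc
  have hstep (N : ℕ) (hN : K ≤ N) : defect (N + 1) = defect N := by
    simp only [defect, count, ← Finset.sum_boole, Finset.sum_range_succ]
    obtain ⟨hlo, hhi⟩ := hK N hN
    split_ifs with h
    · rw [h]; push_cast; ring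
    · rw [show e (N + 1) = e N + j by omega]; push_cast; ring
  have hconst : ∀ N, K ≤ N → defect N = defect K := fun N hN ↦ by
    induction N, hN using Nat.le_induction with
    | base => rfl
    | succ N hN ih => rw [hstep N hN, ih]
  have hlim : Tendsto (fun N : ℕ ↦ (e N : ℝ) / N - j + defect K / N) atTop (𝓝 (θ - j)) := by
    simpa using (he.sub_const (j : ℝ)).add (tendsto_const_div_atTop_nhds_zero_nat (defect K))
  refine hlim.congr' ?_
  filter_upwards [eventually_ge_atTop K, eventually_gt_atTop 0] with N hNK hN
  rw [← hconst N hNK]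
  field_simp
  ring

theorem floor_logb_goldenRatio_lt {a : ℕ} (ha : 2 ≤ a) : (⌊logb φ a⌋₊ : ℝ) < logb φ a := by
  refine (Nat.floor_le (logb_natCast_nonneg one_lt_goldenRatio a)).lt_of_ne fun h ↦
    goldenRatio_pow_ne_natCast (a := a) (by omega) ⌊logb φ a⌋₊ ?_
  rw [← rpow_natCast, h, rpow_logb goldenRatio_pos one_lt_goldenRatio.ne' (by positivity)]

theorem goldenRatio_pow_floor_logb_lt {a : ℕ} (ha : 2 ≤ a) :
    φ ^ ⌊logb φ a⌋₊ < a ∧ (a : ℝ) < φ ^ (⌊logb φ a⌋₊ + 1) := by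
  have ha' : (0 : ℝ) < a := by positivity
  rw [← rpow_natCast, ← rpow_natCast, ← lt_logb_iff_rpow_lt one_lt_goldenRatio ha',
    ← logb_lt_iff_lt_rpow one_lt_goldenRatio ha', Nat.cast_add_one]
  exact ⟨floor_logb_goldenRatio_lt ha, Nat.lt_floor_add_one _⟩

/-- For an integer `a ≥ 2`, the set of natural numbers `k` for which the interval
`[a^k, a^(k+1))` contains exactly `⌈log a / log Φ⌉` Fibonacci numbers has natural density
`⟨log a / log Φ⟩`, where `⟨x⟩` is the fractional part of `x`. -/
theorem density_ceil_fib_count (a : ℕ) (ha : 2 ≤ a)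
    (B : Set ℕ)
    (hB : B = {k : ℕ | ((Set.range Nat.fib ∩ Set.Ico (a ^ k) (a ^ (k + 1))).ncard : ℤ)
        = ⌈Real.log a / Real.log Phi⌉}) :
    Tendsto (fun N : ℕ => (((B ∩ Set.Ico 0 N).ncard : ℝ) / N)) atTop
      (nhds (Int.fract (Real.log a / Real.log Phi))) := by
  change Tendsto _ atTop (𝓝 (Int.fract (logb φ a)))
  change B = {k : ℕ | _ = ⌈logb φ a⌉} at hB
  set j := ⌊logb φ a⌋₊
  have hj : (j : ℝ) < logb φ a := floor_logb_goldenRatio_lt ha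
  have hceil : ⌈logb φ a⌉ = j + 1 :=
    Int.ceil_eq_iff.2 ⟨by push_cast; linarith, by exact_mod_cast (Nat.lt_floor_add_one _).le⟩
  have hfract : Int.fract (logb φ a) = logb φ a - j := by
    rw [← Int.self_sub_floor,
      ← Int.natCast_floor_eq_floor (logb_natCast_nonneg one_lt_goldenRatio a), Int.cast_natCast]
  set e : ℕ → ℕ := fun k ↦ fibCeilIndex (a ^ k)
  have hBe (N : ℕ) :
      B ∩ Set.Ico 0 N = ↑((Finset.range N).filter fun k ↦ e (k + 1) = e k + j + 1) := by
    ext k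
    simp only [hB, hceil, e, ncard_range_fib_inter_Ico (pow_ne_zero k (by omega : a ≠ 0)),
      Set.mem_inter_iff, Set.mem_ofPred_eq, Set.mem_Ico, Finset.coe_filter, Finset.mem_range]
    omega
  have hinc : ∀ᶠ k in atTop, e k + j ≤ e (k + 1) ∧ e (k + 1) ≤ e k + j + 1 := by
    obtain ⟨hlo, hhi⟩ := goldenRatio_pow_floor_logb_lt ha
    simpa only [e, pow_succ'] using
      (tendsto_pow_atTop_atTop_of_one_lt ha).eventually (eventually_fibCeilIndex_mul hlo hhi)
  simp_rw [hBe, Set.ncard_coe_finset, hfract]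
  exact tendsto_card_filter_div_of_increments hinc (tendsto_fibCeilIndex_pow_div a)
end

section
/- Let a ≥ 2 and k ≥ 1 be integers, and let i be the number of Fibonacci numbers in the interval [a^k, a^(k+1)). Then Φ^(i−1) < a < Φ^(i+1), where Φ = (1 + √5)/2. -/
open Nat (fib)
open Real Set
open scoped goldenRatio

/-! Let `m` be the least index with `A ≤ fib m`, so that the Fibonacci numbers in `[A, A * a)` are
`fib m, …, fib (m + i - 1)`. The shifted Binet formula `fib (m + l) = φ ^ l * fib m + ψ ^ m * fib l`
gives `fib (m + l)` as `φ ^ l * fib m` up to an error of size `fib l / φ ^ m < φ ^ l`, which is even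
below `1` when `l ≤ m`. Then `fib (m + i - 1) < A * a ≤ a * fib m` yields `φ ^ (i - 1) < a`
(here `i - 1 < m`, as `A * a ≤ A ^ 2 ≤ fib m ^ 2 ≤ fib (2 * m - 1)`), and
`a * (fib (m - 1) + 1) ≤ A * a ≤ fib (m + i)` yields `a < φ ^ (i + 1)`. -/

lemma exists_le_fib (A : ℕ) : ∃ n, A ≤ fib n :=
  ⟨A + 5, (Nat.le_add_right A 5).trans (Nat.le_fib_self (by omega))⟩

def fibIndex (A : ℕ) : ℕ := Nat.find (exists_le_fib A)

lemma le_fib_iff_fibIndex_le {A n : ℕ} : A ≤ fib n ↔ fibIndex A ≤ n :=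
  ⟨fun h => Nat.find_min' _ h, fun h => (Nat.find_spec (exists_le_fib A)).trans (Nat.fib_mono h)⟩

lemma fib_lt_iff_lt_fibIndex {A n : ℕ} : fib n < A ↔ n < fibIndex A := by
  simpa only [not_le] using le_fib_iff_fibIndex_le.not

lemma le_fib_fibIndex (A : ℕ) : A ≤ fib (fibIndex A) :=
  le_fib_iff_fibIndex_le.2 le_rfl

lemma fibIndex_mono : Monotone fibIndex := fun _ B h =>
  le_fib_iff_fibIndex_le.1 (h.trans (le_fib_fibIndex B))

lemma range_fib_inter_Ico_s14 (A B : ℕ) :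
    range fib ∩ Ico A B = fib '' Ico (fibIndex A) (fibIndex B) := by
  ext x
  constructor
  · rintro ⟨⟨n, rfl⟩, hA, hB⟩
    exact ⟨n, ⟨le_fib_iff_fibIndex_le.1 hA, fib_lt_iff_lt_fibIndex.1 hB⟩, rfl⟩
  · rintro ⟨n, ⟨hA, hB⟩, rfl⟩
    exact ⟨⟨n, rfl⟩, le_fib_iff_fibIndex_le.2 hA, fib_lt_iff_lt_fibIndex.2 hB⟩

lemma ncard_range_fib_inter_Ico_s14 {A : ℕ} (hA : 2 ≤ A) (B : ℕ) :
    (range fib ∩ Ico A B).ncard = fibIndex B - fibIndex A := by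
  have h2 : 2 ≤ fibIndex A := fib_lt_iff_lt_fibIndex.1 (by simpa [Nat.lt_iff_add_one_le] using hA)
  have hinj : InjOn fib (Ico (fibIndex A) (fibIndex B)) :=
    Nat.fib_strictMonoOn.injOn.mono fun n hn => h2.trans hn.1
  rw [range_fib_inter_Ico_s14, hinj.ncard_image, ← Finset.coe_Ico, ncard_coe_finset,
    Nat.card_Ico]

lemma fib_mul_fib_succ_le_fib_add (m n : ℕ) : fib m * fib (n + 1) ≤ fib (m + n) := by
  cases m with
  | zero => simp
  | succ m => rw [add_right_comm, Nat.fib_add]; exact Nat.le_add_left _ _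

lemma fib_lt_goldenRatio_pow (n : ℕ) : (fib n : ℝ) < φ ^ n := by
  cases n with
  | zero => simp
  | succ n =>
    have hψ : ψ * fib n ≤ 0 := mul_nonpos_of_nonpos_of_nonneg goldenConj_neg.le (Nat.cast_nonneg _)
    calc (fib (n + 1) : ℝ) ≤ φ ^ n := by linarith [fib_succ_sub_goldenConj_mul_fib n]
      _ < φ ^ (n + 1) := pow_lt_pow_right₀ one_lt_goldenRatio n.lt_succ_self

lemma coe_fib_add (m l : ℕ) : (fib (m + l) : ℝ) = φ ^ l * fib m + ψ ^ m * fib l := by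
  simp only [coe_fib_eq, pow_add]
  field_simp
  ring

lemma abs_fib_add_sub_goldenRatio_pow_mul_fib (m l : ℕ) :
    |(fib (m + l) : ℝ) - φ ^ l * fib m| = fib l / φ ^ m := by
  rw [coe_fib_add, add_sub_cancel_left, abs_mul, abs_pow, abs_of_neg goldenConj_neg,
    ← inv_goldenRatio, Nat.abs_cast, inv_pow, inv_mul_eq_div]

lemma goldenRatio_pow_mul_fib_lt_fib_add_add_one {m l : ℕ} (hl : (fib l : ℝ) < φ ^ m) :
    φ ^ l * fib m < fib (m + l) + 1 := by
  have herr : (fib l : ℝ) / φ ^ m < 1 := (div_lt_one (pow_pos goldenRatio_pos m)).2 hl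
  linarith [neg_abs_le ((fib (m + l) : ℝ) - φ ^ l * fib m),
    abs_fib_add_sub_goldenRatio_pow_mul_fib m l]

lemma fib_add_lt_goldenRatio_pow_mul (m l : ℕ) :
    (fib (m + l) : ℝ) < φ ^ l * (fib m + 1) := by
  have herr : (fib l : ℝ) / φ ^ m ≤ fib l :=
    div_le_self (Nat.cast_nonneg _) (one_le_pow₀ one_lt_goldenRatio.le)
  linarith [le_abs_self ((fib (m + l) : ℝ) - φ ^ l * fib m),
    abs_fib_add_sub_goldenRatio_pow_mul_fib m l, fib_lt_goldenRatio_pow l]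

lemma goldenRatio_pow_lt_of_fib_lt {A a j : ℕ} (hA : 0 < A) (haA : a ≤ A)
    (h : fib (fibIndex A + j) < A * a) : φ ^ j < a := by
  set m := fibIndex A
  have hAm : A ≤ fib m := le_fib_fibIndex A
  have hjm : j < m := by
    by_contra! hmj
    have : fib m * fib m ≤ fib (m + j) :=
      (Nat.mul_le_mul_left _ (Nat.fib_mono (by omega))).trans (fib_mul_fib_succ_le_fib_add m j)
    have : A * a ≤ fib m * fib m := (Nat.mul_le_mul_left A haA).trans (Nat.mul_le_mul hAm hAm)
    omega
  have hfib : (fib j : ℝ) < φ ^ m :=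
    (fib_lt_goldenRatio_pow j).trans (pow_lt_pow_right₀ one_lt_goldenRatio hjm)
  have hAa : (fib (m + j) : ℝ) + 1 ≤ fib m * a := by
    exact_mod_cast h.trans_le (Nat.mul_le_mul_right a hAm)
  have hpos : (0 : ℝ) < fib m := by exact_mod_cast hA.trans_le hAm
  have := (goldenRatio_pow_mul_fib_lt_fib_add_add_one hfib).trans_le hAa
  rw [mul_comm] at this
  exact lt_of_mul_lt_mul_left this hpos.le

lemma lt_goldenRatio_pow_of_le_fib {A a i : ℕ} (hA : 0 < A)
    (h : A * a ≤ fib (fibIndex A + i)) : (a : ℝ) < φ ^ (i + 1) := by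
  obtain ⟨p, hp⟩ : ∃ p, fibIndex A = p + 1 :=
    Nat.exists_eq_add_one.2 (fib_lt_iff_lt_fibIndex.1 (by simpa using hA))
  have hpA : fib p + 1 ≤ A := fib_lt_iff_lt_fibIndex.2 (by omega)
  have hle : ((fib p : ℝ) + 1) * a ≤ fib (p + (i + 1)) := by
    rw [hp, add_assoc, add_comm 1 i] at h
    exact_mod_cast (Nat.mul_le_mul_right a hpA).trans h
  have := hle.trans_lt (fib_add_lt_goldenRatio_pow_mul p (i + 1))
  rw [mul_comm] at this
  exact lt_of_mul_lt_mul_right this (by positivity)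

/-- Let `a ≥ 2` and `k ≥ 1` be integers, and let `i` be the number of Fibonacci numbers
in `[a^k, a^(k+1))`. Then `Φ^(i-1) < a < Φ^(i+1)`. -/
theorem fib_count_phi_bounds (a k : ℕ) (ha : 2 ≤ a) (hk : 1 ≤ k)
    (i : ℕ) (hi : i = (Set.range Nat.fib ∩ Set.Ico (a ^ k) (a ^ (k + 1))).ncard) :
    Phi ^ ((i : ℤ) - 1) < (a : ℝ) ∧ (a : ℝ) < Phi ^ ((i : ℤ) + 1) := by
  have haA : a ≤ a ^ k := Nat.le_self_pow (by omega) a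
  have hA : 2 ≤ a ^ k := ha.trans haA
  have hmono : fibIndex (a ^ k) ≤ fibIndex (a ^ (k + 1)) :=
    fibIndex_mono (Nat.pow_le_pow_right (by omega) k.le_succ)
  rw [ncard_range_fib_inter_Ico_s14 hA] at hi
  have hM : fibIndex (a ^ k) + i = fibIndex (a ^ (k + 1)) := by omega
  rw [pow_succ] at hM
  rw [show Phi = φ from rfl]
  constructor
  · cases i with
    | zero =>
      calc φ ^ ((0 : ℕ) - 1 : ℤ) < 1 := by simpa using inv_lt_one_of_one_lt₀ one_lt_goldenRatio
        _ < a := by exact_mod_cast ha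
    | succ j =>
      rw [Nat.cast_succ, add_sub_cancel_right, zpow_natCast]
      exact goldenRatio_pow_lt_of_fib_lt (by omega) haA (fib_lt_iff_lt_fibIndex.2 (by omega))
  · rw [← Nat.cast_succ, zpow_natCast]
    exact lt_goldenRatio_pow_of_le_fib (by omega) (hM ▸ le_fib_fibIndex _)
end

section
/- Let a ≥ 2 be an integer and let Φ = (1 + √5)/2. Then the average count of Fibonacci numbers per interval converges: the limit as N → ∞ of (1/N) · Σ_{k=0}^{N−1} card(𝓕 ∩ [a^k, a^(k+1))) exists and equals (log a)/(log Φ). -/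
open Filter

/-!
The sum telescopes: its `N`-th partial sum counts the Fibonacci numbers in `[1, a^N)`. If
`F_{n+1} < x ≤ F_{n+2}`, exactly `n` Fibonacci numbers (`F_2, …, F_{n+1}`) lie in `[1, x)`, and
Binet's formula gives `Φ^n ≤ F_{n+2}` and `F_{n+1} ≤ Φ^n`, so that count differs from
`log x / log Φ` by at most `1`. With `x = a^N` the error `1` disappears after dividing by `N`.
-/

open Set Topology
open scoped goldenRatio

namespace Real

theorem goldenRatio_pow_le_fib_add_two (n : ℕ) : φ ^ n ≤ Nat.fib (n + 2) := by
  have hψ : -ψ * Nat.fib n ≤ Nat.fib n := by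
    nlinarith [goldenConj_neg, neg_one_lt_goldenConj, (Nat.fib n).cast_nonneg (α := ℝ)]
  rw [← fib_succ_sub_goldenConj_mul_fib, Nat.fib_add_two, Nat.cast_add]
  linarith

theorem fib_succ_le_goldenRatio_pow (n : ℕ) : (Nat.fib (n + 1) : ℝ) ≤ φ ^ n := by
  rw [← fib_succ_sub_goldenConj_mul_fib]
  nlinarith [goldenConj_neg, (Nat.fib n).cast_nonneg (α := ℝ)]

end Real

namespace Nat

theorem exists_fib_lt_le_fib {x : ℕ} (hx : 2 ≤ x) :
    ∃ n, fib (n + 1) < x ∧ x ≤ fib (n + 2) := by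
  have hpos : 0 < greatestFib (x - 1) := greatestFib_pos.2 (by omega)
  refine ⟨greatestFib (x - 1) - 1, ?_, ?_⟩
  · rw [Nat.sub_add_cancel hpos]
    have := fib_greatestFib_le (x - 1)
    omega
  · rw [show greatestFib (x - 1) - 1 + 2 = greatestFib (x - 1) + 1 by omega]
    have := lt_fib_greatestFib_add_one (x - 1)
    omega

theorem range_fib_inter_Ico_one_eq_image {n x : ℕ} (hlo : fib (n + 1) < x)
    (hhi : x ≤ fib (n + 2)) : range fib ∩ Ico 1 x = (fun k => fib (k + 2)) '' Iio n := by
  ext m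
  constructor
  · rintro ⟨⟨j, rfl⟩, hj1, hjx⟩
    obtain ⟨k, hk⟩ : ∃ k, fib (k + 2) = fib j := by
      rcases j with _ | _ | k
      · simp at hj1
      · exact ⟨0, rfl⟩
      · exact ⟨k, rfl⟩
    rw [← hk] at hjx ⊢
    exact ⟨k, fib_add_two_strictMono.lt_iff_lt.1 (hjx.trans_le hhi), rfl⟩
  · rintro ⟨k, hk, rfl⟩
    exact ⟨mem_range_self _, fib_pos.2 (by omega),
      (fib_mono (by rw [mem_Iio] at hk; omega)).trans_lt hlo⟩

theorem ncard_range_fib_inter_Ico_one {n x : ℕ} (hlo : fib (n + 1) < x)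
    (hhi : x ≤ fib (n + 2)) : (range fib ∩ Ico 1 x).ncard = n := by
  rw [range_fib_inter_Ico_one_eq_image hlo hhi,
    fib_add_two_strictMono.injective.injOn.ncard_image, ncard_Iio_nat]

end Nat

theorem abs_ncard_range_fib_inter_Ico_one_sub_log_div_le (x : ℕ) :
    |((range Nat.fib ∩ Ico 1 x).ncard : ℝ) - Real.log x / Real.log φ| ≤ 1 := by
  rcases Nat.lt_or_ge x 2 with hx | hx
  · interval_cases x <;> simp
  obtain ⟨n, hlo, hhi⟩ := Nat.exists_fib_lt_le_fib hx
  obtain ⟨m, rfl⟩ : ∃ m, n = m + 1 :=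
    Nat.exists_eq_succ_of_ne_zero (by rintro rfl; simp at hlo hhi; omega)
  have hlow : φ ^ m < x :=
    (Real.goldenRatio_pow_le_fib_add_two m).trans_lt (by exact_mod_cast hlo)
  have hhigh : (x : ℝ) ≤ φ ^ (m + 2) :=
    (Nat.cast_le.2 hhi).trans (Real.fib_succ_le_goldenRatio_pow _)
  have hlogφ : 0 < Real.log φ := Real.log_pos Real.one_lt_goldenRatio
  have hm : (m : ℝ) < Real.log x / Real.log φ := by
    rw [lt_div_iff₀ hlogφ, ← Real.log_pow]
    exact Real.log_lt_log (by positivity) hlow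
  have hm2 : Real.log x / Real.log φ ≤ m + 2 := by
    rw [div_le_iff₀ hlogφ, ← Nat.cast_ofNat, ← Nat.cast_add, ← Real.log_pow]
    exact Real.log_le_log (by positivity) hhigh
  rw [Nat.ncard_range_fib_inter_Ico_one hlo hhi, abs_le]
  push_cast
  constructor <;> linarith

theorem Monotone.sum_ncard_inter_Ico {b : ℕ → ℕ} (hb : Monotone b) (s : Set ℕ) (N : ℕ) :
    ∑ k ∈ Finset.range N, (s ∩ Ico (b k) (b (k + 1))).ncard = (s ∩ Ico (b 0) (b N)).ncard := by
  induction N with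
  | zero => simp
  | succ N ih =>
    rw [Finset.sum_range_succ, ih, ← ncard_union_eq, ← inter_union_distrib_left,
      Ico_union_Ico_eq_Ico (hb N.zero_le) (hb N.le_succ)]
    exact Ico_disjoint_Ico_same.inter_left' s |>.inter_right' s

theorem tendsto_div_natCast_of_abs_sub_mul_le {u : ℕ → ℝ} {c C : ℝ}
    (h : ∀ N, |u N - c * N| ≤ C) : Tendsto (fun N => u N / N) atTop (𝓝 c) := by
  rw [← tendsto_sub_nhds_zero_iff]
  refine squeeze_zero_norm' ?_ (tendsto_const_div_atTop_nhds_zero_nat C)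
  filter_upwards [eventually_gt_atTop 0] with N hN
  have hN : (0 : ℝ) < N := Nat.cast_pos.2 hN
  rw [Real.norm_eq_abs, show u N / N - c = (u N - c * N) / N by field_simp, abs_div,
    abs_of_pos hN]
  exact div_le_div_of_nonneg_right (h N) hN.le

/-- For an integer `a ≥ 2`, the average number of Fibonacci numbers per interval
`[a^k, a^(k+1))` converges to `log a / log Φ`. -/
theorem average_fib_count_tendsto (a : ℕ) (ha : 2 ≤ a) :
    Tendsto
      (fun N : ℕ =>
        (∑ k ∈ Finset.range N,
          ((Set.range Nat.fib ∩ Set.Ico (a ^ k) (a ^ (k + 1))).ncard : ℝ)) / N)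
      atTop (nhds (Real.log a / Real.log Phi)) := by
  refine tendsto_div_natCast_of_abs_sub_mul_le (C := 1) fun N => ?_
  have htel := (pow_right_mono₀ (by omega : 1 ≤ a)).sum_ncard_inter_Ico (range Nat.fib) N
  rw [← Nat.cast_sum, htel, pow_zero]
  convert abs_ncard_range_fib_inter_Ico_one_sub_log_div_le (a ^ N) using 3
  rw [show Phi = φ from rfl, Nat.cast_pow, Real.log_pow]
  ring
end
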